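/- Let F be a strategyproof 2-facility mechanism on the line with approximation ratio at most ρ, and let x be an (i|j,k)-well-separated 3-agent instance with F_2(x) = x_j. Then for every x'_j with x_j < x'_j < x_k, the instance x' obtained by replacing x_j with x'_j satisfies F_2(x') = x'_j. -/

import Mathlib

/-!
Write `d t` for agent `j`'s cost when she reports `t` and the others stay put. For
`x j ≤ t < x k` the left facility lies left of `x j` (otherwise agent `i` alone pays more than
`ρ` times the cost of facilities at `x i` and `x k`), and the right one lies right of `t`
(moving agent `k` onto `t` gives an instance of optimal cost `0`, so strategyproofness for `k`
bounds her cost by `x k - t`). Since `d t ≤ t - x j` by strategyproofness against the report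
`x j`, agent `j` is served by the right facility, which therefore sits at `t + d t`.
Strategyproofness between reports `s` and `t` now reads `d t ≤ |t - (s + d s)|`: `d` is
`1`-Lipschitz and `t + d t` is always a zero of `d`, so real induction spreads the zero
`d (x j) = 0` over `[x j, x'j]`.
-/

noncomputable section

/-- Cost of an agent at location `a` under a pair of facilities. -/
def fcost (a : ℝ) (y : ℝ × ℝ) : ℝ := min |a - y.1| |a - y.2|

/-- Social cost: sum of the agents' distances to their nearest facility. -/
def scost {n : ℕ} (x : Fin n → ℝ) (y : ℝ × ℝ) : ℝ := ∑ i, fcost (x i) y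

/-- Optimal social cost over all placements of two facilities. -/
def optCost {n : ℕ} (x : Fin n → ℝ) : ℝ := ⨅ y : ℝ × ℝ, scost x y

/-- The mechanism outputs its facilities in increasing order. -/
def Ordered {n : ℕ} (F : (Fin n → ℝ) → ℝ × ℝ) : Prop := ∀ x, (F x).1 ≤ (F x).2

/-- No agent can strictly decrease her cost by misreporting her location. -/
def Strategyproof {n : ℕ} (F : (Fin n → ℝ) → ℝ × ℝ) : Prop :=
  ∀ (x : Fin n → ℝ) (i : Fin n) (y : ℝ),
    fcost (x i) (F x) ≤ fcost (x i) (F (Function.update x i y))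

/-- `F` has approximation ratio (at most) `ρ` for the social cost. -/
def ApproxRatio {n : ℕ} (F : (Fin n → ℝ) → ℝ × ℝ) (ρ : ℝ) : Prop :=
  ∀ x, scost x (F x) ≤ ρ * optCost x

/-- An `(i|j,k)`-well-separated 3-agent instance. -/
def WellSep (ρ : ℝ) (x : Fin 3 → ℝ) (i j k : Fin 3) : Prop :=
  x i < x j ∧ x j < x k ∧ ρ * (x k - x j) < x j - x i

open Set Function

theorem eqOn_zero_of_le_abs_sub_add {d : ℝ → ℝ} {a b : ℝ} (ha : d a = 0)
    (hd0 : ∀ t ∈ Icc a b, 0 ≤ d t)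
    (hd : ∀ s ∈ Icc a b, ∀ t ∈ Icc a b, d t ≤ |t - (s + d s)|) :
    EqOn d 0 (Icc a b) := by
  have hlip : LipschitzOnWith 1 d (Icc a b) := LipschitzOnWith.of_le_add fun t ht s hs => by
    calc d t ≤ |t - s - d s| := by simpa only [sub_sub] using hd s hs t ht
      _ ≤ |t - s| + |d s| := abs_sub _ _
      _ = d s + dist t s := by rw [abs_of_nonneg (hd0 s hs), Real.dist_eq]; ring
  have hclosed : IsClosed (d ⁻¹' {0} ∩ Icc a b) := by
    rw [inter_comm]
    exact hlip.continuousOn.preimage_isClosed_of_isClosed isClosed_Icc isClosed_singleton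
  refine fun t ht => hclosed.Icc_subset_of_forall_exists_gt ha ?_ ht
  rintro s ⟨hs0, hs⟩ y hy
  -- `t + d t` is a zero of `d` in `(s, 2 * t - s]`
  obtain ⟨t, hst, hty, htb⟩ : ∃ t, s < t ∧ 2 * t - s ≤ y ∧ 2 * t - s ≤ b :=
    ⟨(s + min y b) / 2, by linarith [lt_min hy hs.2], by linarith [min_le_left y b],
      by linarith [min_le_right y b]⟩
  have ht : t ∈ Icc a b := ⟨by linarith [hs.1], by linarith⟩
  have hdt : d t ≤ t - s := by
    simpa [show d s = 0 from hs0, abs_of_pos (sub_pos.2 hst)] using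
      hd s (Ico_subset_Icc_self hs) t ht
  have hz : t + d t ∈ Icc a b := ⟨by linarith [hd0 t ht, ht.1], by linarith⟩
  refine ⟨t + d t, le_antisymm ?_ (hd0 _ hz), by linarith [hd0 t ht], by linarith⟩
  simpa using hd t ht _ hz

lemma fcost_nonneg (a : ℝ) (y : ℝ × ℝ) : 0 ≤ fcost a y :=
  le_min (abs_nonneg _) (abs_nonneg _)

lemma fcost_le_snd (a : ℝ) (y : ℝ × ℝ) : fcost a y ≤ |a - y.2| := min_le_right _ _

lemma fcost_eq_zero_iff {a : ℝ} {y : ℝ × ℝ} : fcost a y = 0 ↔ y.1 = a ∨ y.2 = a := by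
  constructor
  · intro h
    rcases min_choice |a - y.1| |a - y.2| with h' | h' <;>
      rw [fcost, h', abs_eq_zero, sub_eq_zero] at h
    exacts [Or.inl h.symm, Or.inr h.symm]
  · rintro (h | h) <;> simp [fcost, h]

lemma sub_le_fcost_of_le_fst {a c : ℝ} {y : ℝ × ℝ} (hy : y.1 ≤ y.2) (hc : c ≤ y.1) :
    c - a ≤ fcost a y :=
  le_min (by rw [abs_sub_comm]; exact (sub_le_sub_right hc a).trans (le_abs_self _))
    (by rw [abs_sub_comm]; exact (sub_le_sub_right (hc.trans hy) a).trans (le_abs_self _))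

lemma sub_lt_fcost_of_snd_lt {a c : ℝ} {y : ℝ × ℝ} (hy : y.1 ≤ y.2) (hc : y.2 < c) :
    a - c < fcost a y :=
  lt_min ((sub_lt_sub_left (hy.trans_lt hc) a).trans_le (le_abs_self _))
    ((sub_lt_sub_left hc a).trans_le (le_abs_self _))

lemma snd_eq_add_fcost {a : ℝ} {y : ℝ × ℝ} (h1 : fcost a y < |a - y.1|) (h2 : a ≤ y.2) :
    y.2 = a + fcost a y := by
  rw [fcost, min_eq_right (le_of_not_ge fun h => h1.ne (min_eq_left h)),
    abs_of_nonpos (by linarith)]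
  ring

lemma scost_eq_fcost_add_fcost_add_fcost (x : Fin 3 → ℝ) {i j k : Fin 3} (hij : i ≠ j)
    (hik : i ≠ k) (hjk : j ≠ k) (y : ℝ × ℝ) :
    scost x y = fcost (x i) y + fcost (x j) y + fcost (x k) y := by
  fin_cases i <;> fin_cases j <;> fin_cases k <;> simp_all [scost, Fin.sum_univ_three] <;> ring

lemma fcost_le_scost {n : ℕ} (x : Fin n → ℝ) (i : Fin n) (y : ℝ × ℝ) :
    fcost (x i) y ≤ scost x y :=
  Finset.single_le_sum (fun l _ => fcost_nonneg (x l) y) (Finset.mem_univ i)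

lemma scost_nonneg {n : ℕ} (x : Fin n → ℝ) (y : ℝ × ℝ) : 0 ≤ scost x y :=
  Finset.sum_nonneg fun l _ => fcost_nonneg (x l) y

lemma optCost_nonneg {n : ℕ} (x : Fin n → ℝ) : 0 ≤ optCost x :=
  le_ciInf (scost_nonneg x)

lemma optCost_le_scost {n : ℕ} (x : Fin n → ℝ) (y : ℝ × ℝ) : optCost x ≤ scost x y :=
  ciInf_le ⟨0, by rintro c ⟨y, rfl⟩; exact scost_nonneg x y⟩ y

lemma Strategyproof.fcost_update_le {n : ℕ} {F : (Fin n → ℝ) → ℝ × ℝ}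
    (hsp : Strategyproof F) (x : Fin n → ℝ) (j : Fin n) (t s : ℝ) :
    fcost t (F (update x j t)) ≤ fcost t (F (update x j s)) := by
  simpa using hsp (update x j t) j s

lemma ApproxRatio.scost_eq_zero {n : ℕ} {F : (Fin n → ℝ) → ℝ × ℝ} {ρ : ℝ}
    (happ : ApproxRatio F ρ) {x : Fin n → ℝ} (hx : optCost x = 0) : scost x (F x) = 0 :=
  le_antisymm (by simpa [hx] using happ x) (scost_nonneg x _)

section ThreeAgents

variable {F : (Fin 3 → ℝ) → ℝ × ℝ} {ρ : ℝ} {i j k : Fin 3}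

lemma le_snd_of_lt_of_le (hord : Ordered F) (hsp : Strategyproof F) (happ : ApproxRatio F ρ)
    (hij : i ≠ j) (hik : i ≠ k) (hjk : j ≠ k) {y : Fin 3 → ℝ} (h1 : y i < y j)
    (h2 : y j ≤ y k) : y j ≤ (F y).2 := by
  set w := update y k (y j)
  have hwi : w i = y i := update_of_ne hik _ _
  have hwj : w j = y j := update_of_ne hjk _ _
  have hwk : w k = y j := update_self _ _ _
  have hopt : optCost w = 0 := by
    refine le_antisymm ((optCost_le_scost w (y i, y j)).trans_eq ?_) (optCost_nonneg w)
    rw [scost_eq_fcost_add_fcost_add_fcost w hij hik hjk, hwi, hwj, hwk]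
    simp [fcost]
  have hzero (l : Fin 3) : fcost (w l) (F w) = 0 :=
    le_antisymm ((fcost_le_scost w l _).trans_eq (happ.scost_eq_zero hopt)) (fcost_nonneg _ _)
  have hFw : (F w).2 = y j := by
    have hi := fcost_eq_zero_iff.1 (hzero i)
    have hj := fcost_eq_zero_iff.1 (hzero j)
    rw [hwi] at hi
    rw [hwj] at hj
    have := hord w
    rcases hi with hi | hi <;> rcases hj with hj | hj <;> linarith
  by_contra! hlt
  have hk : fcost (y k) (F y) ≤ fcost (y k) (F w) := hsp y k (y j)
  have hkw : fcost (y k) (F w) ≤ y k - y j :=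
    (fcost_le_snd _ _).trans_eq (by rw [hFw, abs_of_nonneg (sub_nonneg.2 h2)])
  linarith [sub_lt_fcost_of_snd_lt (a := y k) (hord y) hlt]

lemma fst_lt_of_mul_abs_lt (hρ : 0 ≤ ρ) (hord : Ordered F) (happ : ApproxRatio F ρ)
    (hij : i ≠ j) (hik : i ≠ k) (hjk : j ≠ k) {y : Fin 3 → ℝ} {c : ℝ}
    (h : ρ * |y j - y k| < c - y i) : (F y).1 < c := by
  have hopt : optCost y ≤ |y j - y k| := by
    refine (optCost_le_scost y (y i, y k)).trans ?_
    rw [scost_eq_fcost_add_fcost_add_fcost y hij hik hjk]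
    simp [fcost]
  by_contra! hc
  have := (fcost_le_scost y i (F y)).trans (happ y)
  linarith [sub_le_fcost_of_le_fst (a := y i) (hord y) hc, mul_le_mul_of_nonneg_left hopt hρ]

lemma snd_update_eq_add_fcost (hρ : 0 ≤ ρ) (hord : Ordered F) (hsp : Strategyproof F)
    (happ : ApproxRatio F ρ) (hij : i ≠ j) (hik : i ≠ k) (hjk : j ≠ k) {x : Fin 3 → ℝ}
    (hws : WellSep ρ x i j k) (hF : (F x).2 = x j) {t : ℝ} (ht : t ∈ Ico (x j) (x k)) :
    (F (update x j t)).2 = t + fcost t (F (update x j t)) := by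
  obtain ⟨hxij, -, hsep⟩ := hws
  set y := update x j t
  have hyi : y i = x i := update_of_ne hij t x
  have hyj : y j = t := update_self j t x
  have hyk : y k = x k := update_of_ne hjk.symm t x
  have hcost : fcost t (F y) ≤ t - x j :=
    calc fcost t (F y) ≤ fcost t (F x) := by simpa using hsp.fcost_update_le x j t (x j)
      _ ≤ |t - (F x).2| := fcost_le_snd _ _
      _ = t - x j := by rw [hF, abs_of_nonneg (sub_nonneg.2 ht.1)]
  have hfst : (F y).1 < x j := by
    refine fst_lt_of_mul_abs_lt hρ hord happ hij hik hjk ?_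
    rw [hyi, hyj, hyk, abs_sub_comm, abs_of_pos (sub_pos.2 ht.2)]
    exact (mul_le_mul_of_nonneg_left (by linarith [ht.1]) hρ).trans_lt hsep
  have hsnd : t ≤ (F y).2 := by
    simpa [hyj] using le_snd_of_lt_of_le (y := y) hord hsp happ hij hik hjk
      (by rw [hyi, hyj]; linarith [ht.1]) (by rw [hyj, hyk]; exact ht.2.le)
  refine snd_eq_add_fcost ?_ hsnd
  calc fcost t (F y) ≤ t - x j := hcost
    _ < t - (F y).1 := by linarith
    _ ≤ |t - (F y).1| := le_abs_self _

end ThreeAgents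

/-- Proposition `b_pushes_c`: if `x` is `(i|j,k)`-well-separated and the
rightmost facility is at `x_j`, then moving agent `j` to any `x'_j` with
`x_j < x'_j < x_k` keeps the rightmost facility at agent `j`'s location. -/
theorem b_pushes_c (F : (Fin 3 → ℝ) → ℝ × ℝ) (ρ : ℝ) (hρ : 1 ≤ ρ)
    (hord : Ordered F) (hsp : Strategyproof F) (happ : ApproxRatio F ρ)
    (x : Fin 3 → ℝ) (i j k : Fin 3)
    (hij : i ≠ j) (hik : i ≠ k) (hjk : j ≠ k)
    (hws : WellSep ρ x i j k) (hF : (F x).2 = x j)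
    (x'j : ℝ) (h1 : x j < x'j) (h2 : x'j < x k) :
    (F (Function.update x j x'j)).2 = x'j := by
  set d : ℝ → ℝ := fun s => fcost s (F (update x j s))
  have hsnd : ∀ s ∈ Icc (x j) x'j, (F (update x j s)).2 = s + d s := fun s hs =>
    snd_update_eq_add_fcost (by linarith) hord hsp happ hij hik hjk hws hF
      ⟨hs.1, hs.2.trans_lt h2⟩
  have hdx : d (x j) = 0 := by simpa [hF] using hsnd (x j) ⟨le_rfl, h1.le⟩
  have hd : EqOn d 0 (Icc (x j) x'j) := by
    refine eqOn_zero_of_le_abs_sub_add hdx (fun t _ => fcost_nonneg _ _) fun s hs t _ => ?_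
    rw [← hsnd s hs]
    exact (hsp.fcost_update_le x j t s).trans (fcost_le_snd _ _)
  have hx' : x'j ∈ Icc (x j) x'j := ⟨h1.le, le_rfl⟩
  simpa [hd hx'] using hsnd x'j hx'
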